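/- Let E be a Banach lattice and let T : c₀ → E be an order isomorphism with T0 = 0. Denote by (eₙ) the unit vector basis of c₀ and set xₙ = Teₙ. Then every x ∈ E with x ≥ 0 has a unique representation x = ⨆ₙ bₙ·xₙ, where the bₙ are nonnegative real numbers satisfying limₙ ‖bₙ·xₙ‖ = 0. -/

import Mathlib

open Filter Topology ZeroAtInfty

namespace ZeroAtInftyContinuousMap

variable {α : Type*} [TopologicalSpace α]

/-- Pointwise supremum on `C₀(α, ℝ)`. -/
noncomputable instance : Max C₀(α, ℝ) where
  max f g :=
    { toFun := fun x => f x ⊔ g x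
      continuous_toFun := (map_continuous f).sup (map_continuous g)
      zero_at_infty' := by
        simpa using (zero_at_infty f).sup_nhds (zero_at_infty g) }

/-- Pointwise infimum on `C₀(α, ℝ)`. -/
noncomputable instance : Min C₀(α, ℝ) where
  min f g :=
    { toFun := fun x => f x ⊓ g x
      continuous_toFun := (map_continuous f).inf (map_continuous g)
      zero_at_infty' := by
        simpa using (zero_at_infty f).inf_nhds (zero_at_infty g) }

/-- `C₀(α, ℝ)` with the pointwise order is a lattice; in particular `c₀ = C₀(ℕ, ℝ)` is the
Banach lattice of real sequences converging to `0` with coordinatewise order. -/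
noncomputable instance : Lattice C₀(α, ℝ) :=
  letI : LE C₀(α, ℝ) := ⟨fun f g => ⇑f ≤ ⇑g⟩
  letI : LT C₀(α, ℝ) := ⟨fun f g => ⇑f < ⇑g⟩
  DFunLike.coe_injective.lattice _ Iff.rfl Iff.rfl (fun _ _ => rfl) (fun _ _ => rfl)

end ZeroAtInftyContinuousMap

/-- The unit vector basis `(eₙ)` of `c₀ = C₀(ℕ, ℝ)`. -/
noncomputable def c0unit (n : ℕ) : C₀(ℕ, ℝ) :=
  { toFun := fun m => if m = n then 1 else 0
    continuous_toFun := continuous_of_discreteTopology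
    zero_at_infty' := by
      rw [cocompact_eq_atTop]
      refine tendsto_nhds_of_eventually_eq ?_
      filter_upwards [Filter.eventually_gt_atTop n] with m hm
      exact if_neg (by omega) }

/-!
Write `Φ` for the order isomorphism `T`. Since `[0, c • eₙ]` is a chain in `c₀`, so is its image
`[0, Φ (c • eₙ)]`, and in an ordered vector space with closed order the elements of such an
interval are multiples of its top (by connectedness of `[0, 1]`). Hence `Φ (c • eₙ) = β • xₙ`, and
conversely every `β • xₙ` with `β ≥ 0` is some `Φ (c • eₙ)`, because a `g ≥ 0` in `c₀` with
`[0, g]` a chain has only one nonzero coordinate. For `x = Φ g` the coefficients come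
from `g = ⨆ₙ g n • eₙ`, uniqueness from injectivity of `Φ`. For the norms, the elements
`Φ⁻¹ (k • x)` of `c₀` are eventually dominated by one `h ∈ c₀`, so `k • Φ (g n • eₙ) ≤ Φ h` for
large `n`, giving `‖Φ (g n • eₙ)‖ ≤ ‖Φ h‖ / k` eventually.
-/

open Set

section OrderedModule

variable {E : Type*} [AddCommGroup E] [PartialOrder E] [Module ℝ E] [PosSMulMono ℝ E]

theorem IsChain.Icc_zero_smul {u : E} (hch : IsChain (· ≤ ·) (Icc 0 u)) {t : ℝ} (ht : 0 < t) :
    IsChain (· ≤ ·) (Icc 0 (t • u)) := by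
  have := hch.image (OrderIso.smulRight (β := E) ht)
  rwa [OrderIso.image_Icc, OrderIso.smulRight_apply, OrderIso.smulRight_apply, smul_zero] at this

variable [IsOrderedAddMonoid E] [TopologicalSpace E] [ContinuousSMul ℝ E] [OrderClosedTopology E]

/-- The sets `{a | a • u ≤ v}` and `{a | v ≤ a • u}` are closed and cover `[0, 1]`, so they meet
by connectedness. -/
theorem exists_mem_Icc_eq_smul_of_isChain {u v : E} (hch : IsChain (· ≤ ·) (Icc 0 u))
    (hv : v ∈ Icc 0 u) : ∃ a ∈ Icc (0 : ℝ) 1, v = a • u := by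
  have hu : 0 ≤ u := hv.1.trans hv.2
  have hcont : Continuous fun a : ℝ => a • u := continuous_id.smul continuous_const
  obtain ⟨a, ha, hle, hge⟩ := isPreconnected_closed_iff.1 isPreconnected_Icc
    {a : ℝ | a • u ≤ v} {a | v ≤ a • u} (isClosed_le hcont continuous_const)
    (isClosed_le continuous_const hcont)
    (fun a ha => hch.total ⟨smul_nonneg ha.1 hu, smul_le_of_le_one_left hu ha.2⟩ hv)
    ⟨0, ⟨le_rfl, zero_le_one⟩, by simpa using hv.1⟩ ⟨1, ⟨zero_le_one, le_rfl⟩, by simpa using hv.2⟩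
  exact ⟨a, ha, le_antisymm hge hle⟩

theorem exists_nonneg_eq_smul_of_isChain {u v w : E} (hch : IsChain (· ≤ ·) (Icc 0 u))
    (hv : v ∈ Icc 0 u) (hw : w ∈ Icc 0 u) (hw0 : w ≠ 0) : ∃ t : ℝ, 0 ≤ t ∧ v = t • w := by
  obtain ⟨a, ha, rfl⟩ := exists_mem_Icc_eq_smul_of_isChain hch hv
  obtain ⟨b, hb, rfl⟩ := exists_mem_Icc_eq_smul_of_isChain hch hw
  have hb0 : b ≠ 0 := by rintro rfl; simp at hw0
  exact ⟨a / b, div_nonneg ha.1 hb.1, by rw [smul_smul, div_mul_cancel₀ a hb0]⟩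

end OrderedModule

theorem exists_tendsto_zero_eventually_le (g : ℕ → ℕ → ℝ)
    (hg : ∀ k, Tendsto (g k) atTop (𝓝 0)) :
    ∃ h : ℕ → ℝ, (∀ m, 0 ≤ h m) ∧ Tendsto h atTop (𝓝 0) ∧
      ∀ k, ∀ᶠ m in atTop, g k m ≤ h m := by
  set h : ℕ → ℝ := fun m => ⨆ k : ℕ, min |g k m| (1 / (k + 1))
  have hbdd : ∀ m, BddAbove (range fun k : ℕ => min |g k m| (1 / (k + 1))) := fun m =>
    ⟨1, by
      rintro _ ⟨k, rfl⟩
      exact (min_le_right _ _).trans (div_le_one_of_le₀ (by simp) (by positivity))⟩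
  have hle : ∀ k m, min |g k m| (1 / (k + 1)) ≤ h m := fun k m => le_ciSup (hbdd m) k
  have h0 : ∀ m, 0 ≤ h m := fun m => (le_min (abs_nonneg _) (by positivity)).trans (hle 0 m)
  have hsmall : ∀ k, ∀ ε > 0, ∀ᶠ m in atTop, |g k m| ≤ ε := fun k ε hε =>
    (by simpa using (hg k).abs : Tendsto (fun m => |g k m|) atTop (𝓝 0)).eventually_le_const hε
  refine ⟨h, h0, tendsto_order.2 ⟨fun a ha => Eventually.of_forall fun m => ha.trans_le (h0 m),
    fun ε hε => ?_⟩, fun k => ?_⟩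
  · obtain ⟨K, hK⟩ := exists_nat_one_div_lt hε
    filter_upwards [(finite_Iio K).eventually_all.2 fun k _ =>
      hsmall k (1 / (K + 1)) (by positivity)] with m hm
    refine (ciSup_le fun k => ?_).trans_lt hK
    rcases lt_or_ge k K with hk | hk
    · exact (min_le_left _ _).trans (hm k hk)
    · exact (min_le_right _ _).trans (Nat.one_div_le_one_div hk)
  · filter_upwards [hsmall k _ (by positivity : (0 : ℝ) < 1 / (k + 1))] with m hm
    exact (le_abs_self _).trans ((min_eq_left hm).symm.trans_le (hle k m))

theorem tendsto_zero_of_forall_nat_mul_le {ι : Type*} {l : Filter ι} {a : ι → ℝ}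
    (ha : ∀ i, 0 ≤ a i) (C : ℝ) (hC : ∀ k : ℕ, ∀ᶠ i in l, k * a i ≤ C) :
    Tendsto a l (𝓝 0) := by
  refine tendsto_order.2 ⟨fun b hb => Eventually.of_forall fun i => hb.trans_le (ha i),
    fun ε hε => ?_⟩
  obtain ⟨k, hk⟩ := exists_nat_gt (C / ε)
  filter_upwards [hC k] with i hi
  by_contra! hεa
  have : (k : ℝ) * ε ≤ C := (mul_le_mul_of_nonneg_left hεa k.cast_nonneg).trans hi
  rw [div_lt_iff₀ hε] at hk
  linarith

theorem norm_le_norm_of_nonneg_of_le {E : Type*} [NormedAddCommGroup E] [Lattice E]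
    [HasSolidNorm E] [IsOrderedAddMonoid E] {a b : E} (ha : 0 ≤ a) (hab : a ≤ b) : ‖a‖ ≤ ‖b‖ :=
  norm_le_norm_of_abs_le_abs (by rwa [abs_of_nonneg ha, abs_of_nonneg (ha.trans hab)])

namespace ZeroAtInftyContinuousMap

theorem tendsto_atTop_zero (f : C₀(ℕ, ℝ)) : Tendsto f atTop (𝓝 0) := by
  simpa [cocompact_eq_atTop] using zero_at_infty f

def ofTendsto (a : ℕ → ℝ) (ha : Tendsto a atTop (𝓝 0)) : C₀(ℕ, ℝ) where
  toFun := a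
  continuous_toFun := continuous_of_discreteTopology
  zero_at_infty' := by rwa [cocompact_eq_atTop]

@[simp]
theorem ofTendsto_apply (a : ℕ → ℝ) (ha : Tendsto a atTop (𝓝 0)) (m : ℕ) :
    ofTendsto a ha m = a m :=
  rfl

end ZeroAtInftyContinuousMap

open ZeroAtInftyContinuousMap

section UnitVectors

variable {n : ℕ} {c d : ℝ} {g : C₀(ℕ, ℝ)}

theorem smul_c0unit_apply (c : ℝ) (n m : ℕ) : (c • c0unit n) m = if m = n then c else 0 := by
  simp [c0unit]

theorem c0unit_ne_zero (n : ℕ) : c0unit n ≠ 0 := fun h => by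
  simpa [c0unit] using DFunLike.congr_fun h n

theorem smul_c0unit_le_smul_c0unit (h : c ≤ d) (n : ℕ) : c • c0unit n ≤ d • c0unit n := by
  intro m
  simp only [smul_c0unit_apply]
  split_ifs <;> simp [h]

theorem le_apply_of_smul_c0unit_le (h : c • c0unit n ≤ g) : c ≤ g n := by
  simpa [smul_c0unit_apply] using h n

theorem smul_c0unit_le (hg : 0 ≤ g) (hc : c ≤ g n) : c • c0unit n ≤ g := by
  intro m
  rw [smul_c0unit_apply]
  split_ifs with hm
  · exact hm ▸ hc
  · exact hg m

theorem smul_c0unit_nonneg (hc : 0 ≤ c) (n : ℕ) : 0 ≤ c • c0unit n := by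
  simpa using smul_c0unit_le_smul_c0unit hc n

theorem eq_smul_c0unit_of_le (hg : 0 ≤ g) (h : g ≤ c • c0unit n) : g = g n • c0unit n := by
  ext m
  rw [smul_c0unit_apply]
  split_ifs with hm
  · rw [hm]
  · have hgm := h m
    rw [smul_c0unit_apply, if_neg hm] at hgm
    exact le_antisymm hgm (hg m)

theorem isChain_Icc_smul_c0unit (c : ℝ) (n : ℕ) : IsChain (· ≤ ·) (Icc 0 (c • c0unit n)) := by
  rintro g ⟨hg0, hg⟩ h ⟨hh0, hh⟩ -
  rw [eq_smul_c0unit_of_le hg0 hg, eq_smul_c0unit_of_le hh0 hh]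
  exact (le_total (g n) (h n)).imp (smul_c0unit_le_smul_c0unit · n)
    (smul_c0unit_le_smul_c0unit · n)

theorem eq_smul_c0unit_of_isChain (hch : IsChain (· ≤ ·) (Icc 0 g)) (hg : 0 ≤ g)
    (hn : 0 < g n) : g = g n • c0unit n := by
  ext m
  rw [smul_c0unit_apply]
  split_ifs with hm
  · rw [hm]
  have hmem : ∀ k, g k • c0unit k ∈ Icc 0 g := fun k =>
    ⟨smul_c0unit_nonneg (hg k) k, smul_c0unit_le hg le_rfl⟩
  rcases hch.total (hmem m) (hmem n) with h | h
  · have hgm := le_apply_of_smul_c0unit_le h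
    rw [smul_c0unit_apply, if_neg hm] at hgm
    exact le_antisymm hgm (hg m)
  · have hgn := le_apply_of_smul_c0unit_le h
    rw [smul_c0unit_apply, if_neg (Ne.symm hm)] at hgn
    exact absurd hn hgn.not_gt

theorem isLUB_range_smul_c0unit (hg : 0 ≤ g) : IsLUB (range fun n => g n • c0unit n) g :=
  ⟨by rintro _ ⟨n, rfl⟩; exact smul_c0unit_le hg le_rfl,
    fun _ h m => le_apply_of_smul_c0unit_le (h ⟨m, rfl⟩)⟩

theorem isLUB_range_apply_smul_c0unit {E : Type*} [Preorder E] (Φ : C₀(ℕ, ℝ) ≃o E)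
    {g : C₀(ℕ, ℝ)} (hg : 0 ≤ g) :
    IsLUB (range fun n => Φ (g n • c0unit n)) (Φ g) := by
  rw [range_comp' Φ]
  exact Φ.isLUB_image'.2 (isLUB_range_smul_c0unit hg)

end UnitVectors

section OrderIsomorphism

variable {E : Type*} [AddCommGroup E] [PartialOrder E] {Φ : C₀(ℕ, ℝ) ≃o E}

theorem apply_c0unit_ne_zero (hΦ : Φ 0 = 0) (n : ℕ) : Φ (c0unit n) ≠ 0 :=
  hΦ ▸ Φ.injective.ne (c0unit_ne_zero n)

theorem apply_nonneg (hΦ : Φ 0 = 0) {g : C₀(ℕ, ℝ)} (hg : 0 ≤ g) : 0 ≤ Φ g :=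
  hΦ ▸ Φ.monotone hg

theorem isChain_Icc_apply_smul_c0unit (hΦ : Φ 0 = 0) (c : ℝ) (n : ℕ) :
    IsChain (· ≤ ·) (Icc 0 (Φ (c • c0unit n))) := by
  rw [← hΦ, ← Φ.image_Icc]
  exact (isChain_Icc_smul_c0unit c n).image Φ

variable [IsOrderedAddMonoid E] [Module ℝ E] [PosSMulMono ℝ E]

theorem exists_apply_smul_c0unit_eq (hΦ : Φ 0 = 0) {t : ℝ} (ht : 0 ≤ t) (n : ℕ) :
    ∃ c : ℝ, 0 ≤ c ∧ Φ (c • c0unit n) = t • Φ (c0unit n) := by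
  have hx : 0 ≤ Φ (c0unit n) := by
    simpa using apply_nonneg hΦ (smul_c0unit_nonneg zero_le_one n)
  set g := Φ.symm (max t 1 • Φ (c0unit n))
  have hΦ' : Φ.symm 0 = 0 := Φ.symm_apply_eq.2 hΦ.symm
  have hg0 : 0 ≤ g := hΦ' ▸ Φ.symm.monotone (smul_nonneg (by positivity) hx)
  have hchain : IsChain (· ≤ ·) (Icc 0 g) := by
    have := (by simpa using isChain_Icc_apply_smul_c0unit hΦ 1 n :
      IsChain (· ≤ ·) (Icc 0 (Φ (c0unit n)))).Icc_zero_smul (t := max t 1) (by positivity)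
    simpa [Φ.symm.image_Icc, hΦ'] using this.image Φ.symm
  have hgn : 1 ≤ g n := by
    have : c0unit n ≤ g := Φ.le_symm_apply.2 (le_smul_of_one_le_left hx (le_max_right t 1))
    exact le_apply_of_smul_c0unit_le (by simpa using this)
  have hg : g = g n • c0unit n := eq_smul_c0unit_of_isChain hchain hg0 (one_pos.trans_le hgn)
  set h := Φ.symm (t • Φ (c0unit n))
  have hh0 : 0 ≤ h := hΦ' ▸ Φ.symm.monotone (smul_nonneg ht hx)
  have hhg : h ≤ g := Φ.symm.monotone (smul_le_smul_of_nonneg_right (le_max_left t 1) hx)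
  refine ⟨h n, hh0 n, ?_⟩
  rw [← eq_smul_c0unit_of_le hh0 (hg ▸ hhg), Φ.apply_symm_apply]

theorem apply_smul_c0unit_eq_of_isLUB (hΦ : Φ 0 = 0) {g : C₀(ℕ, ℝ)} {b : ℕ → ℝ}
    (hb : ∀ n, 0 ≤ b n) (hlub : IsLUB (range fun n => b n • Φ (c0unit n)) (Φ g)) (n : ℕ) :
    b n • Φ (c0unit n) = Φ (g n • c0unit n) := by
  choose c hc hcb using fun n => exists_apply_smul_c0unit_eq hΦ (hb n) n
  have hcg : ∀ n, c n ≤ g n := fun n =>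
    le_apply_of_smul_c0unit_le (Φ.le_iff_le.1 ((hcb n).trans_le (hlub.1 ⟨n, rfl⟩)))
  set C := ofTendsto c (squeeze_zero hc hcg g.tendsto_atTop_zero)
  have hC : Φ C = Φ g :=
    (isLUB_range_apply_smul_c0unit Φ (g := C) hc).unique (by simpa [C, hcb] using hlub)
  rw [← hcb n, ← Φ.injective hC]
  rfl

variable [TopologicalSpace E] [ContinuousSMul ℝ E] [OrderClosedTopology E]

theorem exists_apply_smul_c0unit_eq_smul (hΦ : Φ 0 = 0) {c : ℝ} (hc : 0 ≤ c) (n : ℕ) :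
    ∃ t : ℝ, 0 ≤ t ∧ Φ (c • c0unit n) = t • Φ (c0unit n) := by
  have hmem : ∀ d, 0 ≤ d → d ≤ max c 1 → Φ (d • c0unit n) ∈ Icc 0 (Φ (max c 1 • c0unit n)) :=
    fun d hd hdc => ⟨apply_nonneg hΦ (smul_c0unit_nonneg hd n),
      Φ.monotone (smul_c0unit_le_smul_c0unit hdc n)⟩
  simpa using exists_nonneg_eq_smul_of_isChain (isChain_Icc_apply_smul_c0unit hΦ (max c 1) n)
    (hmem c hc (le_max_left c 1)) (by simpa using hmem 1 zero_le_one (le_max_right c 1))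
    (apply_c0unit_ne_zero hΦ n)

theorem smul_apply_smul_c0unit_le (hΦ : Φ 0 = 0) {g : C₀(ℕ, ℝ)} (hg : 0 ≤ g) {k : ℝ}
    (hk : 0 ≤ k) (n : ℕ) : k • Φ (g n • c0unit n) ≤ Φ ((Φ.symm (k • Φ g)) n • c0unit n) := by
  obtain ⟨t, ht, hgt⟩ := exists_apply_smul_c0unit_eq_smul hΦ (hg n) n
  obtain ⟨c, -, hct⟩ := exists_apply_smul_c0unit_eq hΦ (mul_nonneg hk ht) n
  have hle : Φ (c • c0unit n) ≤ k • Φ g := by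
    rw [hct, ← smul_smul, ← hgt]
    exact smul_le_smul_of_nonneg_left (Φ.monotone (smul_c0unit_le hg le_rfl)) hk
  rw [hgt, smul_smul, ← hct]
  exact Φ.monotone
    (smul_c0unit_le_smul_c0unit (le_apply_of_smul_c0unit_le (Φ.le_symm_apply.2 hle)) n)

end OrderIsomorphism

theorem tendsto_norm_apply_smul_c0unit {E : Type*} [NormedAddCommGroup E] [Lattice E]
    [HasSolidNorm E] [IsOrderedAddMonoid E] [NormedSpace ℝ E] [PosSMulMono ℝ E]
    {Φ : C₀(ℕ, ℝ) ≃o E} (hΦ : Φ 0 = 0) {g : C₀(ℕ, ℝ)} (hg : 0 ≤ g) :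
    Tendsto (fun n => ‖Φ (g n • c0unit n)‖) atTop (𝓝 0) := by
  obtain ⟨h, h0, hh, hdom⟩ := exists_tendsto_zero_eventually_le
    (fun k : ℕ => Φ.symm ((k : ℝ) • Φ g)) fun k => tendsto_atTop_zero _
  refine tendsto_zero_of_forall_nat_mul_le (fun _ => norm_nonneg _) ‖Φ (ofTendsto h hh)‖
    fun k => ?_
  filter_upwards [hdom k] with n hn
  have hle : (k : ℝ) • Φ (g n • c0unit n) ≤ Φ (ofTendsto h hh) :=
    (smul_apply_smul_c0unit_le hΦ hg k.cast_nonneg n).trans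
      (Φ.monotone (smul_c0unit_le (g := ofTendsto h hh) h0 hn))
  calc (k : ℝ) * ‖Φ (g n • c0unit n)‖ = ‖(k : ℝ) • Φ (g n • c0unit n)‖ := by
        rw [norm_smul, Real.norm_natCast]
    _ ≤ ‖Φ (ofTendsto h hh)‖ := norm_le_norm_of_nonneg_of_le
        (smul_nonneg k.cast_nonneg (apply_nonneg hΦ (smul_c0unit_nonneg (hg n) n))) hle

theorem stmt6_general (E : Type*) [NormedAddCommGroup E] [Lattice E] [HasSolidNorm E]
    [IsOrderedAddMonoid E] [NormedSpace ℝ E] [PosSMulStrictMono ℝ E]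
    (T : C₀(ℕ, ℝ) → E) (hbij : Function.Bijective T)
    (hord : ∀ f g : C₀(ℕ, ℝ), f ≤ g ↔ T f ≤ T g) (hzero : T 0 = 0) :
    ∀ x : E, 0 ≤ x →
      ∃! b : ℕ → ℝ,
        (∀ n, 0 ≤ b n) ∧
        Filter.Tendsto (fun n => ‖b n • T (c0unit n)‖) Filter.atTop (nhds 0) ∧
        IsLUB (Set.range fun n => b n • T (c0unit n)) x := by
  obtain ⟨Φ, rfl⟩ : ∃ Φ : C₀(ℕ, ℝ) ≃o E, ⇑Φ = T :=
    ⟨⟨Equiv.ofBijective T hbij, (hord _ _).symm⟩, rfl⟩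
  intro x hx
  obtain ⟨g, rfl⟩ := Φ.surjective x
  have hg : 0 ≤ g := by rwa [← hzero, Φ.le_iff_le] at hx
  choose b hb hbg using fun n => exists_apply_smul_c0unit_eq_smul hzero (hg n) n
  refine ⟨b, ⟨hb, ?_, ?_⟩, fun b' ⟨hb', _, hlub⟩ => funext fun n => ?_⟩
  · simpa [← hbg] using tendsto_norm_apply_smul_c0unit hzero hg
  · simpa [← hbg] using isLUB_range_apply_smul_c0unit Φ hg
  · exact smul_left_injective ℝ (apply_c0unit_ne_zero hzero n)
      ((apply_smul_c0unit_eq_of_isLUB hzero hb' hlub n).trans (hbg n))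

/-- Let `T : c₀ → E` be an order isomorphism onto a Banach lattice `E` with
`T 0 = 0`, and let `xₙ = T eₙ` where `(eₙ)` is the unit vector basis of `c₀`. Then every
`x ≥ 0` in `E` has a unique representation `x = ⨆ₙ bₙ • xₙ` with all `bₙ ≥ 0` and
`limₙ ‖bₙ • xₙ‖ = 0`. -/
theorem stmt6 (E : Type*) [NormedAddCommGroup E] [Lattice E] [HasSolidNorm E]
    [IsOrderedAddMonoid E] [NormedSpace ℝ E] [PosSMulStrictMono ℝ E] [PosSMulReflectLT ℝ E]
    [CompleteSpace E]
    (T : C₀(ℕ, ℝ) → E) (hbij : Function.Bijective T)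
    (hord : ∀ f g : C₀(ℕ, ℝ), f ≤ g ↔ T f ≤ T g) (hzero : T 0 = 0) :
    ∀ x : E, 0 ≤ x →
      ∃! b : ℕ → ℝ,
        (∀ n, 0 ≤ b n) ∧
        Filter.Tendsto (fun n => ‖b n • T (c0unit n)‖) Filter.atTop (nhds 0) ∧
        IsLUB (Set.range fun n => b n • T (c0unit n)) x :=
  stmt6_general E T hbij hord hzero
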